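/- Let λ, μ : ℝ≥0 → ℝ≥0 be continuous, fix s ≥ 0, and define A(s,t) = ∫_s^t (λ + μ)(u) du, p₀₁(s,t) = 1 - e^{-A(s,t)}(1 + ∫_s^t e^{A(s,u)} λ(u) du), and p₁₁(s,t) = e^{-A(s,t)}(1 + ∫_s^t e^{A(s,u)} μ(u) du). Then for all t ≥ s, 0 ≤ p₀₁(s,t) ≤ 1 and 0 ≤ p₁₁(s,t) ≤ 1. -/

import Mathlib

/-!
Write `a = λ + μ` and `A(t) = ∫_s^t a`. Since `(e^A)' = e^A a`, the integral `∫_s^t e^{A} a` equals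
`e^{A(t)} - 1`. For any weight `0 ≤ g ≤ a` this squeezes `1 + ∫_s^t e^{A} g` between `1` and
`e^{A(t)}`, so `e^{-A(t)} (1 + ∫_s^t e^{A} g) ∈ [0, 1]`. Taking `g = μ` gives `p₁₁`, and taking
`g = λ` gives `1 - p₀₁`.
-/

open intervalIntegral Real

theorem integral_exp_integral_mul {a : ℝ → ℝ} (ha : Continuous a) (s t : ℝ) :
    ∫ u in s..t, exp (∫ v in s..u, a v) * a u = exp (∫ v in s..t, a v) - 1 := by
  have hA : Continuous fun u => ∫ v in s..u, a v := continuous_primitive ha.intervalIntegrable s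
  rw [integral_eq_sub_of_hasDerivAt (fun u _ => (ha.integral_hasStrictDerivAt s u).hasDerivAt.exp)
    ((hA.rexp.mul ha).intervalIntegrable s t), integral_same, exp_zero]

theorem exp_neg_integral_mul_one_add_integral_mem_Icc {a g : ℝ → ℝ} (ha : Continuous a)
    (hg : Continuous g) (hg0 : ∀ u, 0 ≤ g u) (hga : ∀ u, g u ≤ a u) {s t : ℝ} (hst : s ≤ t) :
    exp (-∫ v in s..t, a v) * (1 + ∫ u in s..t, exp (∫ v in s..u, a v) * g u) ∈ Set.Icc 0 1 := by
  have hA : Continuous fun u => ∫ v in s..u, a v := continuous_primitive ha.intervalIntegrable s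
  have hI0 : 0 ≤ ∫ u in s..t, exp (∫ v in s..u, a v) * g u :=
    integral_nonneg hst fun u _ => mul_nonneg (exp_pos _).le (hg0 u)
  have hIle : ∫ u in s..t, exp (∫ v in s..u, a v) * g u ≤ exp (∫ v in s..t, a v) - 1 := by
    rw [← integral_exp_integral_mul ha]
    exact integral_mono_on hst ((hA.rexp.mul hg).intervalIntegrable s t)
      ((hA.rexp.mul ha).intervalIntegrable s t)
      fun u _ => mul_le_mul_of_nonneg_left (hga u) (exp_pos _).le
  rw [exp_neg, ← div_eq_inv_mul]
  exact ⟨by positivity, (div_le_one (exp_pos _)).2 (by linarith)⟩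

theorem stmt13_general (lam mu : ℝ → ℝ) (hlam : Continuous lam) (hmu : Continuous mu)
    (hlam0 : ∀ t, 0 ≤ lam t) (hmu0 : ∀ t, 0 ≤ mu t)
    (s : ℝ)
    (A : ℝ → ℝ) (hA : ∀ t, A t = ∫ u in s..t, (lam u + mu u))
    (p01 p11 : ℝ → ℝ)
    (hp01 : ∀ t, p01 t = 1 - Real.exp (-(A t)) * (1 + ∫ u in s..t, Real.exp (A u) * lam u))
    (hp11 : ∀ t, p11 t = Real.exp (-(A t)) * (1 + ∫ u in s..t, Real.exp (A u) * mu u)) :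
    ∀ t, s ≤ t → (0 ≤ p01 t ∧ p01 t ≤ 1) ∧ (0 ≤ p11 t ∧ p11 t ≤ 1) := by
  intro t hst
  have hsum : Continuous fun u => lam u + mu u := hlam.add hmu
  obtain ⟨h01, h01'⟩ := exp_neg_integral_mul_one_add_integral_mem_Icc hsum hlam hlam0
    (fun u => le_add_of_nonneg_right (hmu0 u)) hst
  obtain ⟨h11, h11'⟩ := exp_neg_integral_mul_one_add_integral_mem_Icc hsum hmu hmu0
    (fun u => le_add_of_nonneg_left (hlam0 u)) hst
  simp only [hp01, hp11, hA]
  exact ⟨⟨by linarith, by linarith⟩, h11, h11'⟩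

theorem stmt13 (lam mu : ℝ → ℝ) (hlam : Continuous lam) (hmu : Continuous mu)
    (hlam0 : ∀ t, 0 ≤ lam t) (hmu0 : ∀ t, 0 ≤ mu t)
    (s : ℝ) (hs : 0 ≤ s)
    (A : ℝ → ℝ) (hA : ∀ t, A t = ∫ u in s..t, (lam u + mu u))
    (p01 p11 : ℝ → ℝ)
    (hp01 : ∀ t, p01 t = 1 - Real.exp (-(A t)) * (1 + ∫ u in s..t, Real.exp (A u) * lam u))
    (hp11 : ∀ t, p11 t = Real.exp (-(A t)) * (1 + ∫ u in s..t, Real.exp (A u) * mu u)) :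
    ∀ t, s ≤ t → (0 ≤ p01 t ∧ p01 t ≤ 1) ∧ (0 ≤ p11 t ∧ p11 t ≤ 1) :=
  stmt13_general lam mu hlam hmu hlam0 hmu0 s A hA p01 p11 hp01 hp11
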